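/- arXiv:1309.1728 — 6 statements merged into one kernel-verified Lean document; each statement's English description precedes it below -/
import Mathlib

section
/- Let (n, t, b) be an orthonormal basis of ℝ³, let x₀ ∈ ℝ³, μ⁺, μ⁻ > 0, H ∈ ℝ, and let u⁺, u⁻ : ℝ³ → ℝ³ be twice differentiable at x₀. Assume trace(Du⁺(x₀)) = 0 and trace(Du⁻(x₀)) = 0, and μ⁺(⟪Du⁺(x₀)t, t⟫ + ⟪Du⁺(x₀)b, b⟫) = μ⁻(⟪Du⁻(x₀)t, t⟫ + ⟪Du⁻(x₀)b, b⟫). For each field set ∇ₛ²u^± := Δu^±(x₀) − D²u^±(x₀)(n,n) − H·Du^±(x₀)n, where Δu(x₀) := D²u(x₀)(n,n) + D²u(x₀)(t,t) + D²u(x₀)(b,b). Then ⟪μ⁺∇ₛ²u⁺ − μ⁻∇ₛ²u⁻, n⟫ = ⟪μ⁺(D²u⁺(x₀)(t,t) + D²u⁺(x₀)(b,b)) − μ⁻(D²u⁻(x₀)(t,t) + D²u⁻(x₀)(b,b)), n⟫. -/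
open RealInnerProductSpace

noncomputable section

abbrev E3 := EuclideanSpace ℝ (Fin 3)

/-- The second Fréchet derivative of a map `u : ℝ³ → ℝ³`, applied to two vectors. -/
def D2 (u : E3 → E3) (x v w : E3) : E3 := fderiv ℝ (fderiv ℝ u) x v w

/-- The Laplacian at `x₀` expressed in the orthonormal frame `(n, t, b)`:
`Δu(x₀) = D²u(x₀)(n,n) + D²u(x₀)(t,t) + D²u(x₀)(b,b)`. -/
def lapFrame (n t b : E3) (u : E3 → E3) (x : E3) : E3 :=
  D2 u x n n + D2 u x t t + D2 u x b b

/-- The surface Laplacian at `x₀`: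
`∇ₛ²u = Δu(x₀) − D²u(x₀)(n,n) − H·Du(x₀)n`. -/
def surfLap (n t b : E3) (H : ℝ) (u : E3 → E3) (x : E3) : E3 :=
  lapFrame n t b u x - D2 u x n n - H • fderiv ℝ u x n

lemma trace_frame (n t b : E3) (hON : Orthonormal ℝ ![n, t, b])
    (A : E3 →L[ℝ] E3) :
    LinearMap.trace ℝ E3 (A : E3 →ₗ[ℝ] E3)
      = ⟪A n, n⟫ + ⟪A t, t⟫ + ⟪A b, b⟫ := by
  have hcard : Fintype.card (Fin 3) = Module.finrank ℝ E3 := by simp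
  let B := basisOfOrthonormalOfCardEqFinrank hON hcard
  have hB : (B : Fin 3 → E3) = ![n, t, b] := coe_basisOfOrthonormalOfCardEqFinrank hON hcard
  have hONB : Orthonormal ℝ B := by rwa [hB]
  let OB := B.toOrthonormalBasis hONB
  have h : LinearMap.trace ℝ E3 (A : E3 →ₗ[ℝ] E3)
      = ∑ i : Fin 3, ⟪A (OB i), OB i⟫ := by
    rw [LinearMap.trace_eq_matrix_trace ℝ OB.toBasis, Matrix.trace]
    congr 1
    ext i
    rw [Matrix.diag_apply, LinearMap.toMatrix_apply]
    rw [OB.coe_toBasis_repr_apply, OB.repr_apply_apply, real_inner_comm]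
    simp [OB.coe_toBasis]
  rw [h]
  have hOB : ∀ i, OB i = ![n,t,b] i := by
    intro i
    simp only [OB, Module.Basis.coe_toOrthonormalBasis, hB]
  simp [Fin.sum_univ_three, hOB]

/-- Theorem 3.3: `[μ ∇ₛ²u]·n = [μ (∂²u/∂t² + ∂²u/∂b²)]·n`. -/
theorem jump_surface_laplacian_normal
    (n t b : E3) (hON : Orthonormal ℝ ![n, t, b])
    (x₀ : E3) (μp μm : ℝ) (hμp : 0 < μp) (hμm : 0 < μm) (H : ℝ)
    (up um : E3 → E3)
    (hup : ∀ᶠ x in nhds x₀, DifferentiableAt ℝ up x)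
    (hum : ∀ᶠ x in nhds x₀, DifferentiableAt ℝ um x)
    (hup2 : DifferentiableAt ℝ (fderiv ℝ up) x₀)
    (hum2 : DifferentiableAt ℝ (fderiv ℝ um) x₀)
    (hdivp : LinearMap.trace ℝ E3 (fderiv ℝ up x₀ : E3 →ₗ[ℝ] E3) = 0)
    (hdivm : LinearMap.trace ℝ E3 (fderiv ℝ um x₀ : E3 →ₗ[ℝ] E3) = 0)
    (hsurf : μp * (⟪fderiv ℝ up x₀ t, t⟫ + ⟪fderiv ℝ up x₀ b, b⟫)
           = μm * (⟪fderiv ℝ um x₀ t, t⟫ + ⟪fderiv ℝ um x₀ b, b⟫)) :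
    ⟪μp • surfLap n t b H up x₀ - μm • surfLap n t b H um x₀, n⟫
      = ⟪μp • (D2 up x₀ t t + D2 up x₀ b b) - μm • (D2 um x₀ t t + D2 um x₀ b b), n⟫ := by
  have hp := trace_frame n t b hON (fderiv ℝ up x₀)
  have hm := trace_frame n t b hON (fderiv ℝ um x₀)
  rw [hdivp] at hp
  rw [hdivm] at hm
  have key : μp * ⟪fderiv ℝ up x₀ n, n⟫ = μm * ⟪fderiv ℝ um x₀ n, n⟫ := by
    nlinarith [hsurf, hp, hm]
  simp only [surfLap, lapFrame, inner_sub_left, inner_add_left, real_inner_smul_left]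
  linear_combination (-H) * key
end
end

section
/- Let S² = {x ∈ ℝ³ : ‖x‖ = 1}, and let p⁺, p⁻ : ℝ³ → ℝ be C² on open sets U⁺, U⁻ containing S², g⁺, g⁻ : ℝ³ → ℝ³ be C¹ with Δp^± = div g^± on U^±, and f : ℝ³ → ℝ³ be C² on a neighborhood of S². Assume the pressure jump condition p⁺(x) − p⁻(x) = −⟪f(x), x⟫ holds for all x ∈ S². Then for every x ∈ S² and every pair t, b of orthonormal vectors with ⟪t,x⟫ = ⟪b,x⟫ = 0: D²p⁺(x)(x,x) − D²p⁻(x)(x,x) = (D²φ(x)(t,t) + D²φ(x)(b,b) − 2⟪∇φ(x), x⟫) + div g⁺(x) − div g⁻(x) − 2⟪∇p⁺(x) − ∇p⁻(x), x⟫, where φ : ℝ³ → ℝ is φ(y) := ⟪f(y), y⟫. -/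
open RealInnerProductSpace

noncomputable section

/-- The unit sphere in ℝ³. -/
def unitSphere : Set E3 := {x : E3 | ‖x‖ = 1}

/-- The second Fréchet derivative of a scalar field `p : ℝ³ → ℝ`, applied to two vectors. -/
def D2s (p : E3 → ℝ) (x v w : E3) : ℝ := fderiv ℝ (fderiv ℝ p) x v w

/-- The Laplacian of a scalar field `p : ℝ³ → ℝ` at `x`. -/
def scalLap (p : E3 → ℝ) (x : E3) : ℝ :=
  ∑ i : Fin 3, fderiv ℝ (fderiv ℝ p) x (EuclideanSpace.single i 1) (EuclideanSpace.single i 1)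

/-- The divergence of `g : ℝ³ → ℝ³` at `x`, i.e. the trace of its Fréchet derivative. -/
def diverg (g : E3 → E3) (x : E3) : ℝ :=
  LinearMap.trace ℝ E3 (fderiv ℝ g x : E3 →ₗ[ℝ] E3)

/-- If a C² function vanishes on the unit sphere, then at a point `x` of the sphere its
second derivative in a unit tangent direction `t` equals its radial first derivative. -/
lemma tangent_second (q : E3 → ℝ) (W : Set E3) (hW : IsOpen W) (hSW : unitSphere ⊆ W)
    (hq : ContDiffOn ℝ 2 q W) (h0 : ∀ y ∈ unitSphere, q y = 0)
    (x t : E3) (hx : ‖x‖ = 1) (ht : ‖t‖ = 1) (hxt : ⟪t, x⟫ = 0) :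
    fderiv ℝ (fderiv ℝ q) x t t = fderiv ℝ q x x := by
  have hxx : ⟪x, x⟫ = 1 := by
    rw [real_inner_self_eq_norm_sq, hx]; norm_num
  have htt : ⟪t, t⟫ = 1 := by
    rw [real_inner_self_eq_norm_sq, ht]; norm_num
  have htx' : ⟪x, t⟫ = 0 := by rw [real_inner_comm]; exact hxt
  set γ : ℝ → E3 := fun s => Real.cos s • x + Real.sin s • t with hγdef
  have hsphere : ∀ s, γ s ∈ unitSphere := by
    intro s
    have h1 : ⟪γ s, γ s⟫ = 1 := by
      simp only [hγdef, inner_add_left, inner_add_right, real_inner_smul_left,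
        real_inner_smul_right, hxx, htt, hxt, htx']
      ring_nf
      rw [add_comm]
      exact Real.sin_sq_add_cos_sq s
    show ‖γ s‖ = 1
    have := real_inner_self_eq_norm_sq (γ s)
    nlinarith [norm_nonneg (γ s)]
  have hxW : ∀ s, γ s ∈ W := fun s => hSW (hsphere s)
  have hγ0 : γ 0 = x := by simp [hγdef]
  set v : ℝ → E3 := fun s => (-Real.sin s) • x + Real.cos s • t with hvdef
  have hv0 : v 0 = t := by simp [hvdef]
  have hγ' : ∀ s, HasDerivAt γ (v s) s := by
    intro s
    exact (((Real.hasDerivAt_cos s).smul_const x).add ((Real.hasDerivAt_sin s).smul_const t))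
  have hqdiff : ∀ s, DifferentiableAt ℝ q (γ s) := fun s =>
    (hq.contDiffAt (hW.mem_nhds (hxW s))).differentiableAt two_ne_zero
  have h1 : ∀ s, fderiv ℝ q (γ s) (v s) = 0 := by
    intro s
    have hcomp : HasDerivAt (fun s => q (γ s)) (fderiv ℝ q (γ s) (v s)) s :=
      (hqdiff s).hasFDerivAt.comp_hasDerivAt s (hγ' s)
    have hfun : (fun s => q (γ s)) = fun _ => (0 : ℝ) := funext fun s => h0 _ (hsphere s)
    rw [hfun] at hcomp
    exact ((hasDerivAt_const s (0:ℝ)).unique hcomp).symm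
  have hq1 : DifferentiableAt ℝ (fderiv ℝ q) x :=
    ((hq.contDiffAt (hW.mem_nhds (by rw [← hγ0]; exact hxW 0))).fderiv_right
      (m := 1) (by norm_num)).differentiableAt one_ne_zero
  have hu : HasDerivAt (fun s => fderiv ℝ q (γ s)) (fderiv ℝ (fderiv ℝ q) x t) 0 := by
    have hfd : HasFDerivAt (fderiv ℝ q) (fderiv ℝ (fderiv ℝ q) x) (γ 0) := by
      rw [hγ0]; exact hq1.hasFDerivAt
    have := hfd.comp_hasDerivAt 0 (hγ' 0)
    simpa [hv0, Function.comp_def] using this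
  have hv' : HasDerivAt v (-x) 0 := by
    have h := (((Real.hasDerivAt_sin 0).neg.smul_const x).add ((Real.hasDerivAt_cos 0).smul_const t))
    have hveq : v = fun s => -(Real.sin s • x) + Real.cos s • t := by
      funext s; simp [hvdef, neg_smul]
    rw [hveq]
    simpa [Pi.add_def] using h
  have happ : HasDerivAt (fun s => fderiv ℝ q (γ s) (v s))
      (fderiv ℝ (fderiv ℝ q) x t (v 0) + fderiv ℝ q (γ 0) (-x)) 0 :=
    hu.clm_apply hv'
  have hfun2 : (fun s => fderiv ℝ q (γ s) (v s)) = fun _ => (0 : ℝ) := funext h1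
  rw [hfun2] at happ
  have hz := (hasDerivAt_const (0:ℝ) (0:ℝ)).unique happ
  rw [hγ0, hv0, map_neg] at hz
  linarith

/-- The trace of a continuous bilinear form over the standard orthonormal basis of ℝ³ agrees
with the trace over any other orthonormal basis. -/
lemma sumB (B : E3 →L[ℝ] E3 →L[ℝ] ℝ) (o : OrthonormalBasis (Fin 3) ℝ E3) :
    ∑ i : Fin 3, B (EuclideanSpace.single i 1) (EuclideanSpace.single i 1)
      = ∑ i : Fin 3, B (o i) (o i) := by
  set e : OrthonormalBasis (Fin 3) ℝ E3 := EuclideanSpace.basisFun (Fin 3) ℝ with hedef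
  have he : ∀ j, (EuclideanSpace.single j 1 : E3) = e j := fun j =>
    (EuclideanSpace.basisFun_apply (Fin 3) ℝ j).symm
  have hexp : ∀ j : Fin 3, B (e j) (e j)
      = ∑ i : Fin 3, ∑ k : Fin 3, ⟪o i, e j⟫ * (⟪o k, e j⟫ * B (o i) (o k)) := by
    intro j
    conv_lhs => rw [← o.sum_repr' (e j)]
    simp only [map_sum, map_smul, ContinuousLinearMap.coe_sum', Finset.sum_apply,
      ContinuousLinearMap.coe_smul', Pi.smul_apply, smul_eq_mul, Finset.mul_sum]
    rw [Finset.sum_comm]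
    exact Finset.sum_congr rfl fun i _ => Finset.sum_congr rfl fun k _ => by ring
  calc ∑ j : Fin 3, B (EuclideanSpace.single j 1) (EuclideanSpace.single j 1)
      = ∑ j : Fin 3, ∑ i : Fin 3, ∑ k : Fin 3, ⟪o i, e j⟫ * (⟪o k, e j⟫ * B (o i) (o k)) := by
        simp_rw [he]; exact Finset.sum_congr rfl fun j _ => hexp j
    _ = ∑ i : Fin 3, ∑ k : Fin 3, (∑ j : Fin 3, ⟪o i, e j⟫ * ⟪e j, o k⟫) * B (o i) (o k) := by
        rw [Finset.sum_comm]
        refine Finset.sum_congr rfl fun i _ => ?_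
        rw [Finset.sum_comm]
        refine Finset.sum_congr rfl fun k _ => ?_
        rw [Finset.sum_mul]
        refine Finset.sum_congr rfl fun j _ => ?_
        rw [real_inner_comm (o k) (e j)]; ring
    _ = ∑ i : Fin 3, ∑ k : Fin 3, ⟪o i, o k⟫ * B (o i) (o k) := by
        simp_rw [e.sum_inner_mul_inner]
    _ = ∑ i : Fin 3, B (o i) (o i) := by
        refine Finset.sum_congr rfl fun i _ => ?_
        rw [Finset.sum_eq_single i]
        · rw [real_inner_self_eq_norm_sq, o.orthonormal.1 i]; norm_num
        · intro k _ hk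
          rw [o.orthonormal.2 (Ne.symm hk)]; ring
        · intro h; exact absurd (Finset.mem_univ i) h

lemma fderiv2_add (p1 p2 : E3 → ℝ) (W : Set E3) (hW : IsOpen W) (x : E3) (hxW : x ∈ W)
    (h1 : ContDiffOn ℝ 2 p1 W) (h2 : ContDiffOn ℝ 2 p2 W) (v w : E3) :
    fderiv ℝ (fderiv ℝ (fun y => p1 y + p2 y)) x v w
      = fderiv ℝ (fderiv ℝ p1) x v w + fderiv ℝ (fderiv ℝ p2) x v w := by
  have hd1 : ∀ y ∈ W, DifferentiableAt ℝ p1 y := fun y hy =>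
    (h1.contDiffAt (hW.mem_nhds hy)).differentiableAt two_ne_zero
  have hd2 : ∀ y ∈ W, DifferentiableAt ℝ p2 y := fun y hy =>
    (h2.contDiffAt (hW.mem_nhds hy)).differentiableAt two_ne_zero
  have heq : fderiv ℝ (fun y => p1 y + p2 y) =ᶠ[nhds x]
      fun y => fderiv ℝ p1 y + fderiv ℝ p2 y := by
    filter_upwards [hW.mem_nhds hxW] with y hy
    exact fderiv_add (hd1 y hy) (hd2 y hy)
  have hf1 : DifferentiableAt ℝ (fderiv ℝ p1) x :=
    ((h1.contDiffAt (hW.mem_nhds hxW)).fderiv_right (m := 1) (by norm_num)).differentiableAt one_ne_zero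
  have hf2 : DifferentiableAt ℝ (fderiv ℝ p2) x :=
    ((h2.contDiffAt (hW.mem_nhds hxW)).fderiv_right (m := 1) (by norm_num)).differentiableAt one_ne_zero
  rw [heq.fderiv_eq, fderiv_fun_add hf1 hf2]
  simp

lemma fderiv2_sub (p1 p2 : E3 → ℝ) (W : Set E3) (hW : IsOpen W) (x : E3) (hxW : x ∈ W)
    (h1 : ContDiffOn ℝ 2 p1 W) (h2 : ContDiffOn ℝ 2 p2 W) (v w : E3) :
    fderiv ℝ (fderiv ℝ (fun y => p1 y - p2 y)) x v w
      = fderiv ℝ (fderiv ℝ p1) x v w - fderiv ℝ (fderiv ℝ p2) x v w := by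
  have hd1 : ∀ y ∈ W, DifferentiableAt ℝ p1 y := fun y hy =>
    (h1.contDiffAt (hW.mem_nhds hy)).differentiableAt two_ne_zero
  have hd2 : ∀ y ∈ W, DifferentiableAt ℝ p2 y := fun y hy =>
    (h2.contDiffAt (hW.mem_nhds hy)).differentiableAt two_ne_zero
  have heq : fderiv ℝ (fun y => p1 y - p2 y) =ᶠ[nhds x]
      fun y => fderiv ℝ p1 y - fderiv ℝ p2 y := by
    filter_upwards [hW.mem_nhds hxW] with y hy
    exact fderiv_sub (hd1 y hy) (hd2 y hy)
  have hf1 : DifferentiableAt ℝ (fderiv ℝ p1) x :=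
    ((h1.contDiffAt (hW.mem_nhds hxW)).fderiv_right (m := 1) (by norm_num)).differentiableAt one_ne_zero
  have hf2 : DifferentiableAt ℝ (fderiv ℝ p2) x :=
    ((h2.contDiffAt (hW.mem_nhds hxW)).fderiv_right (m := 1) (by norm_num)).differentiableAt one_ne_zero
  rw [heq.fderiv_eq, fderiv_fun_sub hf1 hf2]
  simp

lemma grad_inner (h : E3 → ℝ) (x u : E3) : ⟪gradient h x, u⟫ = fderiv ℝ h x u := by
  have : gradient h x = (InnerProductSpace.toDual ℝ E3).symm (fderiv ℝ h x) := rfl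
  rw [this]
  exact InnerProductSpace.toDual_symm_apply

/-- Theorem 3.6 on the unit sphere (normal `n(x) = x`, total curvature `H = 2`):
`[∂²p/∂n²] = ∇ₛ²(f·n) + [∇·g] − [∂p/∂n]H`. -/
theorem jump_d2pdn2_sphere
    (Up Um : Set E3) (hUp : IsOpen Up) (hUm : IsOpen Um)
    (hSUp : unitSphere ⊆ Up) (hSUm : unitSphere ⊆ Um)
    (pp pm : E3 → ℝ) (gp gm : E3 → E3) (f : E3 → E3)
    (hpp : ContDiffOn ℝ 2 pp Up) (hpm : ContDiffOn ℝ 2 pm Um)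
    (hgp : ContDiffOn ℝ 1 gp Up) (hgm : ContDiffOn ℝ 1 gm Um)
    (hpoissonp : ∀ x ∈ Up, scalLap pp x = diverg gp x)
    (hpoissonm : ∀ x ∈ Um, scalLap pm x = diverg gm x)
    (Vf : Set E3) (hVf : IsOpen Vf) (hSVf : unitSphere ⊆ Vf)
    (hf : ContDiffOn ℝ 2 f Vf)
    (hpjump : ∀ x ∈ unitSphere, pp x - pm x = -⟪f x, x⟫) :
    ∀ x ∈ unitSphere, ∀ t b : E3,
      ‖t‖ = 1 → ‖b‖ = 1 → ⟪t, b⟫ = 0 → ⟪t, x⟫ = 0 → ⟪b, x⟫ = 0 →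
      D2s pp x x x - D2s pm x x x
        = (D2s (fun y => ⟪f y, y⟫) x t t + D2s (fun y => ⟪f y, y⟫) x b b
            - 2 * ⟪gradient (fun y => ⟪f y, y⟫) x, x⟫)
          + diverg gp x - diverg gm x
          - 2 * ⟪gradient pp x - gradient pm x, x⟫ := by
  intro x hx t b ht hb htb htx hbx
  have hxs : ‖x‖ = 1 := hx
  -- the common open neighbourhood of the sphere
  set W : Set E3 := Up ∩ (Um ∩ Vf) with hWdef
  have hW : IsOpen W := hUp.inter (hUm.inter hVf)
  have hSW : unitSphere ⊆ W := fun y hy => ⟨hSUp hy, hSUm hy, hSVf hy⟩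
  have hxW : x ∈ W := hSW hx
  have hxUp : x ∈ Up := hxW.1
  have hxUm : x ∈ Um := hxW.2.1
  set φ : E3 → ℝ := fun y => ⟪f y, y⟫ with hφdef
  have hφ : ContDiffOn ℝ 2 φ W :=
    ContDiffOn.inner (𝕜 := ℝ) (hf.mono fun y hy => hy.2.2) contDiffOn_id
  have hppW : ContDiffOn ℝ 2 pp W := hpp.mono fun y hy => hy.1
  have hpmW : ContDiffOn ℝ 2 pm W := hpm.mono fun y hy => hy.2.1
  set P : E3 → ℝ := fun y => pp y - pm y with hPdef
  have hP : ContDiffOn ℝ 2 P W := hppW.sub hpmW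
  set q : E3 → ℝ := fun y => P y + φ y with hqdef
  have hq : ContDiffOn ℝ 2 q W := hP.add hφ
  have h0 : ∀ y ∈ unitSphere, q y = 0 := by
    intro y hy
    have := hpjump y hy
    simp only [hqdef, hPdef, hφdef]
    linarith
  -- tangential second-derivative identities for q
  have hqt : fderiv ℝ (fderiv ℝ q) x t t = fderiv ℝ q x x :=
    tangent_second q W hW hSW hq h0 x t hxs ht htx
  have hqb : fderiv ℝ (fderiv ℝ q) x b b = fderiv ℝ q x x :=
    tangent_second q W hW hSW hq h0 x b hxs hb hbx
  -- linearity of the second derivative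
  have hqsplit : ∀ v w : E3, fderiv ℝ (fderiv ℝ q) x v w
      = fderiv ℝ (fderiv ℝ P) x v w + fderiv ℝ (fderiv ℝ φ) x v w := fun v w =>
    fderiv2_add P φ W hW x hxW hP hφ v w
  have hPsplit : ∀ v w : E3, fderiv ℝ (fderiv ℝ P) x v w
      = fderiv ℝ (fderiv ℝ pp) x v w - fderiv ℝ (fderiv ℝ pm) x v w := fun v w =>
    fderiv2_sub pp pm W hW x hxW hppW hpmW v w
  -- linearity of the first derivative
  have hdP : DifferentiableAt ℝ P x :=
    (hP.contDiffAt (hW.mem_nhds hxW)).differentiableAt two_ne_zero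
  have hdφ : DifferentiableAt ℝ φ x :=
    (hφ.contDiffAt (hW.mem_nhds hxW)).differentiableAt two_ne_zero
  have hdpp : DifferentiableAt ℝ pp x :=
    (hppW.contDiffAt (hW.mem_nhds hxW)).differentiableAt two_ne_zero
  have hdpm : DifferentiableAt ℝ pm x :=
    (hpmW.contDiffAt (hW.mem_nhds hxW)).differentiableAt two_ne_zero
  have hq1 : fderiv ℝ q x x = fderiv ℝ P x x + fderiv ℝ φ x x := by
    rw [hqdef, fderiv_fun_add hdP hdφ]; simp
  have hP1 : fderiv ℝ P x x = fderiv ℝ pp x x - fderiv ℝ pm x x := by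
    rw [hPdef, fderiv_fun_sub hdpp hdpm]; simp
  -- the orthonormal basis {x, t, b}
  have hxx : ⟪x, x⟫ = 1 := by rw [real_inner_self_eq_norm_sq, hxs]; norm_num
  have htt : ⟪t, t⟫ = 1 := by rw [real_inner_self_eq_norm_sq, ht]; norm_num
  have hbb : ⟪b, b⟫ = 1 := by rw [real_inner_self_eq_norm_sq, hb]; norm_num
  have hxt : ⟪x, t⟫ = 0 := by rw [real_inner_comm]; exact htx
  have hxb : ⟪x, b⟫ = 0 := by rw [real_inner_comm]; exact hbx
  have hbt : ⟪b, t⟫ = 0 := by rw [real_inner_comm]; exact htb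
  have hvon : Orthonormal ℝ ![x, t, b] := by
    rw [orthonormal_iff_ite]
    intro i j
    fin_cases i <;> fin_cases j <;>
      simp [hxx, htt, hbb, hxt, hxb, hbt, htx, hbx, htb, hxs, ht, hb]
  have hcard : Fintype.card (Fin 3) = Module.finrank ℝ E3 := by
    simp [finrank_euclideanSpace]
  let bas : Module.Basis (Fin 3) ℝ E3 :=
    basisOfLinearIndependentOfCardEqFinrank hvon.linearIndependent hcard
  have hbas : ⇑bas = ![x, t, b] :=
    coe_basisOfLinearIndependentOfCardEqFinrank _ _
  let o : OrthonormalBasis (Fin 3) ℝ E3 := bas.toOrthonormalBasis (by rwa [hbas])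
  have ho : ⇑o = ![x, t, b] := by
    rw [Module.Basis.coe_toOrthonormalBasis]; exact hbas
  -- Laplacian identity
  have hlapP : scalLap pp x - scalLap pm x
      = fderiv ℝ (fderiv ℝ P) x x x + fderiv ℝ (fderiv ℝ P) x t t
        + fderiv ℝ (fderiv ℝ P) x b b := by
    have h1 : scalLap pp x - scalLap pm x
        = ∑ i : Fin 3, fderiv ℝ (fderiv ℝ P) x (EuclideanSpace.single i 1)
            (EuclideanSpace.single i 1) := by
      rw [scalLap, scalLap, ← Finset.sum_sub_distrib]
      exact Finset.sum_congr rfl fun i _ => (hPsplit _ _).symm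
    rw [h1, sumB (fderiv ℝ (fderiv ℝ P) x) o]
    have h0' : o 0 = x := by rw [ho]; rfl
    have h1' : o 1 = t := by rw [ho]; rfl
    have h2' : o 2 = b := by rw [ho]; rfl
    rw [Fin.sum_univ_three, h0', h1', h2']
  have hdiv : diverg gp x - diverg gm x
      = fderiv ℝ (fderiv ℝ P) x x x + fderiv ℝ (fderiv ℝ P) x t t
        + fderiv ℝ (fderiv ℝ P) x b b := by
    rw [← hpoissonp x hxUp, ← hpoissonm x hxUm]; exact hlapP
  -- gradients
  have hgφ : ⟪gradient φ x, x⟫ = fderiv ℝ φ x x := grad_inner φ x x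
  have hgP : ⟪gradient pp x - gradient pm x, x⟫ = fderiv ℝ pp x x - fderiv ℝ pm x x := by
    rw [inner_sub_left, grad_inner, grad_inner]
  -- put everything together
  simp only [D2s]
  rw [← hφdef] at *
  have e1 := hqsplit t t
  have e2 := hqsplit b b
  have e3 := hPsplit t t
  have e4 := hPsplit b b
  have e5 := hPsplit x x
  rw [hgφ, hgP]
  linarith [hqt, hqb, hq1, hP1, e1, e2, e3, e4, e5, hdiv]
end
end

section
/- Let (n, t, b) be an orthonormal basis of ℝ³, x₀ ∈ ℝ³, μ⁺, μ⁻ > 0, p⁺, p⁻ ∈ ℝ, f ∈ ℝ³, and let u⁺, u⁻ : ℝ³ → ℝ³ be differentiable at x₀. Assume: (i) trace(Du⁺(x₀)) = 0 and trace(Du⁻(x₀)) = 0; (ii) μ⁺(⟪Du⁺(x₀)t, t⟫ + ⟪Du⁺(x₀)b, b⟫) = μ⁻(⟪Du⁻(x₀)t, t⟫ + ⟪Du⁻(x₀)b, b⟫); (iii) tangential derivatives are continuous: Du⁺(x₀)t = Du⁻(x₀)t and Du⁺(x₀)b = Du⁻(x₀)b; (iv) the stress balance (−p⁺·n + μ⁺(Du⁺(x₀)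 + Du⁺(x₀)*)n) − (−p⁻·n + μ⁻(Du⁻(x₀) + Du⁻(x₀)*)n) = f. Then μ⁺·Du⁺(x₀)n − μ⁻·Du⁻(x₀)n = (f − ⟪f, n⟫·n) − (μ⁺ − μ⁻)(⟪Du⁻(x₀)t, n⟫·t + ⟪Du⁻(x₀)b, n⟫·b). -/
set_option maxHeartbeats 1000000


open RealInnerProductSpace

noncomputable section

/-- Theorem 3.8: the jump in the normal derivative of the augmented velocity is
`[μ ∂u/∂n] = P f − [μ]((∂q/∂t·n)t + (∂q/∂b·n)b)`, where `P = I − n⊗n`. -/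
theorem jump_mu_dudn
    (n t b : E3) (hON : Orthonormal ℝ ![n, t, b])
    (x₀ : E3) (μp μm : ℝ) (hμp : 0 < μp) (hμm : 0 < μm)
    (pp pm : ℝ) (f : E3)
    (up um : E3 → E3)
    (hup : DifferentiableAt ℝ up x₀) (hum : DifferentiableAt ℝ um x₀)
    (hdivp : LinearMap.trace ℝ E3 (fderiv ℝ up x₀ : E3 →ₗ[ℝ] E3) = 0)
    (hdivm : LinearMap.trace ℝ E3 (fderiv ℝ um x₀ : E3 →ₗ[ℝ] E3) = 0)
    (hsurf : μp * (⟪fderiv ℝ up x₀ t, t⟫ + ⟪fderiv ℝ up x₀ b, b⟫)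
           = μm * (⟪fderiv ℝ um x₀ t, t⟫ + ⟪fderiv ℝ um x₀ b, b⟫))
    (htangt : fderiv ℝ up x₀ t = fderiv ℝ um x₀ t)
    (htangb : fderiv ℝ up x₀ b = fderiv ℝ um x₀ b)
    (hstress :
      ((-pp) • n + μp • ((fderiv ℝ up x₀ + ContinuousLinearMap.adjoint (fderiv ℝ up x₀)) n))
        - ((-pm) • n + μm • ((fderiv ℝ um x₀ + ContinuousLinearMap.adjoint (fderiv ℝ um x₀)) n))
        = f) :
    μp • fderiv ℝ up x₀ n - μm • fderiv ℝ um x₀ n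
      = (f - ⟪f, n⟫ • n)
        - (μp - μm) • (⟪fderiv ℝ um x₀ t, n⟫ • t + ⟪fderiv ℝ um x₀ b, n⟫ • b) := by
  set A := fderiv ℝ up x₀ with hA
  set B := fderiv ℝ um x₀ with hB
  have hval := (orthonormal_iff_ite (𝕜 := ℝ)).mp hON
  have hnn : ⟪n, n⟫ = 1 := by simpa using hval 0 0
  have htt : ⟪t, t⟫ = 1 := by simpa using hval 1 1
  have hbb : ⟪b, b⟫ = 1 := by simpa using hval 2 2
  have hnt : ⟪n, t⟫ = 0 := by simpa using hval 0 1
  have hnb : ⟪n, b⟫ = 0 := by simpa using hval 0 2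
  have htn : ⟪t, n⟫ = 0 := by simpa using hval 1 0
  have htb : ⟪t, b⟫ = 0 := by simpa using hval 1 2
  have hbn : ⟪b, n⟫ = 0 := by simpa using hval 2 0
  have hbt : ⟪b, t⟫ = 0 := by simpa using hval 2 1
  -- orthonormal basis
  have hcard : Fintype.card (Fin 3) = Module.finrank ℝ E3 := by simp
  set bas : Module.Basis (Fin 3) ℝ E3 :=
    basisOfLinearIndependentOfCardEqFinrank hON.linearIndependent hcard with hbasdef
  have hbas : ⇑bas = ![n, t, b] := coe_basisOfLinearIndependentOfCardEqFinrank _ _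
  set ob : OrthonormalBasis (Fin 3) ℝ E3 := bas.toOrthonormalBasis (by rwa [hbas]) with hobdef
  have hob : ⇑ob = ![n, t, b] := by rw [hobdef, Module.Basis.coe_toOrthonormalBasis, hbas]
  -- trace formula
  have htr : ∀ (L : E3 →L[ℝ] E3), LinearMap.trace ℝ E3 (L : E3 →ₗ[ℝ] E3)
      = ⟪L n, n⟫ + ⟪L t, t⟫ + ⟪L b, b⟫ := by
    intro L
    rw [LinearMap.trace_eq_matrix_trace ℝ ob.toBasis, Matrix.trace, Fin.sum_univ_three]
    simp only [Matrix.diag_apply, LinearMap.toMatrix_apply, ob.coe_toBasis_repr_apply,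
      ob.repr_apply_apply, OrthonormalBasis.coe_toBasis, hob, ContinuousLinearMap.coe_coe,
      Matrix.cons_val_zero, Matrix.cons_val_one, Matrix.head_cons, Matrix.cons_val_two,
      Matrix.tail_cons]
    rw [real_inner_comm n (L n), real_inner_comm t (L t), real_inner_comm b (L b)]
  have hAnn : μp * ⟪A n, n⟫ = μm * ⟪B n, n⟫ := by
    have h1 := htr A; have h2 := htr B
    rw [hdivp] at h1; rw [hdivm] at h2
    linear_combination -μp * h1 + μm * h2 - hsurf
  -- key: reduce to inner products with basis vectors
  rw [← sub_eq_zero]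
  rw [← ob.sum_repr' (μp • A n - μm • B n -
      ((f - ⟪f, n⟫ • n) - (μp - μm) • (⟪B t, n⟫ • t + ⟪B b, n⟫ • b)))]
  rw [Fin.sum_univ_three]
  have hf := hstress
  have hfn : ⟪f, n⟫ = pm - pp + 2 * μp * ⟪A n, n⟫ - 2 * μm * ⟪B n, n⟫ := by
    rw [← hf]
    simp only [inner_sub_left, inner_add_left, inner_smul_left, ContinuousLinearMap.add_apply,
      RCLike.inner_apply, conj_trivial]
    rw [ContinuousLinearMap.adjoint_inner_left, ContinuousLinearMap.adjoint_inner_left,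
      real_inner_comm (A n) n, real_inner_comm (B n) n, hnn]
    ring
  have hft : ⟪f, t⟫ = μp * ⟪A n, t⟫ + μp * ⟪B t, n⟫ - μm * ⟪B n, t⟫ - μm * ⟪B t, n⟫ := by
    rw [← hf]
    simp only [inner_sub_left, inner_add_left, inner_smul_left, ContinuousLinearMap.add_apply,
      RCLike.inner_apply, conj_trivial]
    rw [ContinuousLinearMap.adjoint_inner_left, ContinuousLinearMap.adjoint_inner_left,
      htangt, real_inner_comm (B t) n, hnt]
    ring
  have hfb : ⟪f, b⟫ = μp * ⟪A n, b⟫ + μp * ⟪B b, n⟫ - μm * ⟪B n, b⟫ - μm * ⟪B b, n⟫ := by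
    rw [← hf]
    simp only [inner_sub_left, inner_add_left, inner_smul_left, ContinuousLinearMap.add_apply,
      RCLike.inner_apply, conj_trivial]
    rw [ContinuousLinearMap.adjoint_inner_left, ContinuousLinearMap.adjoint_inner_left,
      htangb, real_inner_comm (B b) n, hnb]
    ring
  have e0 : ob 0 = n := by rw [hob]; rfl
  have e1 : ob 1 = t := by rw [hob]; rfl
  have e2 : ob 2 = b := by rw [hob]; rfl
  rw [e0, e1, e2]
  have c0 : ⟪n, μp • A n - μm • B n -
      ((f - ⟪f, n⟫ • n) - (μp - μm) • (⟪B t, n⟫ • t + ⟪B b, n⟫ • b))⟫ = 0 := by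
    simp only [inner_sub_right, inner_add_right, real_inner_smul_right, hnn, hnt, hnb]
    rw [real_inner_comm (A n) n, real_inner_comm (B n) n, real_inner_comm f n, hfn]
    linear_combination hAnn
  have c1 : ⟪t, μp • A n - μm • B n -
      ((f - ⟪f, n⟫ • n) - (μp - μm) • (⟪B t, n⟫ • t + ⟪B b, n⟫ • b))⟫ = 0 := by
    simp only [inner_sub_right, inner_add_right, real_inner_smul_right, htt, htn, htb]
    rw [real_inner_comm (A n) t, real_inner_comm (B n) t, real_inner_comm f t, hft]
    ring
  have c2 : ⟪b, μp • A n - μm • B n -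
      ((f - ⟪f, n⟫ • n) - (μp - μm) • (⟪B t, n⟫ • t + ⟪B b, n⟫ • b))⟫ = 0 := by
    simp only [inner_sub_right, inner_add_right, real_inner_smul_right, hbb, hbn, hbt]
    rw [real_inner_comm (A n) b, real_inner_comm (B n) b, real_inner_comm f b, hfb]
    ring
  rw [c0, c1, c2]
  simp
end
end

section
/- Let S² = {x ∈ ℝ³ : ‖x‖ = 1}, μ⁺, μ⁻ > 0, and let u⁺, u⁻ : ℝ³ → ℝ³ be C² on open sets containing S², p⁺, p⁻ C¹ on those sets, g⁺, g⁻ continuous, and f C¹ on a neighborhood of S². Assume: (i) for every x ∈ S², ∇p^±(x) = μ^±Δu^±(x) + g^±(x); (ii) u⁺ = u⁻ on S²; (iii) for every x ∈ S², p⁺(x) − p⁻(x) = −⟪f(x), x⟫. Then for every x ∈ S² and every pair t, b of orthonormal vectors with ⟪t,x⟫ = ⟪b,x⟫ = 0: μ⁺·D²u⁺(x)(x,x) − μ⁻·D²u⁻(x)(x,x) = −(μ⁺ − μ⁻)·Δ_S u⁻(x) − 2(μ⁺·Du⁺(x)x − μ⁻·Du⁻(x)x) + ⟪∇p⁺(x)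 − ∇p⁻(x), x⟫·x − (∇φ(x) − ⟪∇φ(x), x⟫·x) − (g⁺(x) − g⁻(x)), where Δ_S u⁻(x) := D²u⁻(x)(t,t) + D²u⁻(x)(b,b) − 2·Du⁻(x)x and φ(y) := ⟪f(y), y⟫. -/
open RealInnerProductSpace

noncomputable section

/-- The componentwise vector Laplacian of `u : ℝ³ → ℝ³` at `x`. -/
def vecLap (u : E3 → E3) (x : E3) : E3 :=
  ∑ i : Fin 3, fderiv ℝ (fderiv ℝ u) x (EuclideanSpace.single i 1) (EuclideanSpace.single i 1)

/-! ### Auxiliary lemmas -/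

lemma exists_onb (v : Fin 3 → E3) (hv : Orthonormal ℝ v) :
    ∃ B : OrthonormalBasis (Fin 3) ℝ E3, ⇑B = v := by
  have hcard : Fintype.card (Fin 3) = Module.finrank ℝ E3 := by
    simp [finrank_euclideanSpace]
  have hspan := (basisOfOrthonormalOfCardEqFinrank hv hcard).span_eq
  rw [coe_basisOfOrthonormalOfCardEqFinrank] at hspan
  exact ⟨OrthonormalBasis.mk hv hspan.ge, OrthonormalBasis.coe_mk hv hspan.ge⟩

lemma onb_of (t b x : E3) (ht : ‖t‖ = 1) (hb : ‖b‖ = 1) (hx : ‖x‖ = 1)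
    (htb : ⟪t, b⟫ = 0) (htx : ⟪t, x⟫ = 0) (hbx : ⟪b, x⟫ = 0) :
    ∃ B : OrthonormalBasis (Fin 3) ℝ E3, ⇑B = ![t, b, x] := by
  apply exists_onb
  rw [orthonormal_iff_ite]
  have h1 : ⟪t, t⟫ = 1 := by rw [real_inner_self_eq_norm_mul_norm, ht]; norm_num
  have h2 : ⟪b, b⟫ = 1 := by rw [real_inner_self_eq_norm_mul_norm, hb]; norm_num
  have h3 : ⟪x, x⟫ = 1 := by rw [real_inner_self_eq_norm_mul_norm, hx]; norm_num
  intro i j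
  fin_cases i <;> fin_cases j <;>
    simp only [Fin.reduceFinMk, Fin.zero_eta, Fin.mk_one, Fin.isValue, Matrix.cons_val_zero,
      Matrix.cons_val_one, Matrix.head_cons, Matrix.cons_val_two, Matrix.tail_cons,
      reduceIte] <;>
    first
      | exact h1 | exact h2 | exact h3 | exact htb | exact htx | exact hbx
      | (rw [real_inner_comm]; first | exact htb | exact htx | exact hbx)

lemma trace_onb (B : E3 →L[ℝ] E3 →L[ℝ] E3) (e : OrthonormalBasis (Fin 3) ℝ E3) :
    ∑ i : Fin 3, B (EuclideanSpace.single i 1) (EuclideanSpace.single i 1)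
      = ∑ i : Fin 3, B (e i) (e i) := by
  have key : ∀ w1 w2 : E3, B w1 w2
      = ∑ j : Fin 3, ∑ k : Fin 3, (⟪e j, w1⟫ * ⟪e k, w2⟫) • B (e j) (e k) := by
    intro w1 w2
    conv_lhs => rw [← e.sum_repr' w1, ← e.sum_repr' w2]
    simp only [map_sum, map_smul, ContinuousLinearMap.sum_apply,
      ContinuousLinearMap.smul_apply, ContinuousLinearMap.coe_sum', ContinuousLinearMap.coe_smul',
      Finset.sum_apply, Pi.smul_apply, Finset.smul_sum, smul_smul]
    rw [Finset.sum_comm]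
    exact Finset.sum_congr rfl fun j _ => Finset.sum_congr rfl fun k _ => by rw [mul_comm]
  have horth := orthonormal_iff_ite.mp e.orthonormal
  calc ∑ i : Fin 3, B (EuclideanSpace.single i 1) (EuclideanSpace.single i 1)
      = ∑ i : Fin 3, ∑ j : Fin 3, ∑ k : Fin 3,
          (⟪e j, EuclideanSpace.single i 1⟫ * ⟪e k, EuclideanSpace.single i 1⟫)
            • B (e j) (e k) := by
        exact Finset.sum_congr rfl fun i _ => key _ _
    _ = ∑ j : Fin 3, ∑ k : Fin 3,
          (∑ i : Fin 3, ⟪e j, EuclideanSpace.single i 1⟫ * ⟪e k, EuclideanSpace.single i 1⟫)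
            • B (e j) (e k) := by
        rw [Finset.sum_comm]
        refine Finset.sum_congr rfl fun j _ => ?_
        rw [Finset.sum_comm]
        exact Finset.sum_congr rfl fun k _ => (Finset.sum_smul).symm
    _ = ∑ j : Fin 3, ∑ k : Fin 3, ⟪e j, e k⟫ • B (e j) (e k) := by
        refine Finset.sum_congr rfl fun j _ => Finset.sum_congr rfl fun k _ => ?_
        congr 1
        have h := (EuclideanSpace.basisFun (Fin 3) ℝ).sum_inner_mul_inner (e j) (e k)
        simp only [EuclideanSpace.basisFun_apply] at h
        rw [← h]
        exact Finset.sum_congr rfl fun i _ => by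
          rw [real_inner_comm (e k) (EuclideanSpace.single i 1)]
    _ = ∑ j : Fin 3, B (e j) (e j) := by
        refine Finset.sum_congr rfl fun j _ => ?_
        rw [Finset.sum_eq_single j]
        · rw [horth j j, if_pos rfl, one_smul]
        · intro k _ hk
          rw [horth j k, if_neg (by exact fun h => hk h.symm), zero_smul]
        · intro h; exact absurd (Finset.mem_univ j) h

section Curve

variable {F : Type*} [NormedAddCommGroup F] [NormedSpace ℝ F]

/-- the great circle through x in direction t -/
def gc (x t : E3) (s : ℝ) : E3 := Real.cos s • x + Real.sin s • t

def gc' (x t : E3) (s : ℝ) : E3 := (-Real.sin s) • x + Real.cos s • t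

lemma gc_mem (x t : E3) (hx : ‖x‖ = 1) (ht : ‖t‖ = 1) (htx : ⟪t, x⟫ = 0) (s : ℝ) :
    gc x t s ∈ unitSphere := by
  have hxx : ⟪x, x⟫ = 1 := by rw [real_inner_self_eq_norm_mul_norm, hx]; norm_num
  have htt : ⟪t, t⟫ = 1 := by rw [real_inner_self_eq_norm_mul_norm, ht]; norm_num
  have hxt : ⟪x, t⟫ = 0 := by rw [real_inner_comm]; exact htx
  have h : ⟪gc x t s, gc x t s⟫ = 1 := by
    simp only [gc, inner_add_add_self, inner_smul_left, inner_smul_right, real_inner_smul_left,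
      real_inner_smul_right, hxx, htt, hxt, htx, conj_trivial]
    ring_nf
    linarith [Real.sin_sq_add_cos_sq s]
  have h2 : ‖gc x t s‖ ^ 2 = 1 := by
    rw [← real_inner_self_eq_norm_sq, h]
  show ‖gc x t s‖ = 1
  nlinarith [norm_nonneg (gc x t s)]

lemma gc_hasDerivAt (x t : E3) (s : ℝ) : HasDerivAt (gc x t) (gc' x t s) s := by
  exact ((Real.hasDerivAt_cos s).smul_const x).add ((Real.hasDerivAt_sin s).smul_const t)

lemma gc'_hasDerivAt (x t : E3) (s : ℝ) :
    HasDerivAt (gc' x t) ((-Real.cos s) • x + (-Real.sin s) • t) s := by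
  exact (((Real.hasDerivAt_sin s).neg).smul_const x).add
    (((Real.hasDerivAt_cos s)).smul_const t)

lemma gc_zero (x t : E3) : gc x t 0 = x := by simp [gc]

lemma gc'_zero (x t : E3) : gc' x t 0 = t := by simp [gc']

/-- First-order tangency: a C¹ function vanishing on the sphere has zero tangential derivative. -/
lemma fderiv_gc_dir (U : Set E3) (hU : IsOpen U) (hS : unitSphere ⊆ U)
    (w : E3 → F) (hw : ContDiffOn ℝ 1 w U) (hw0 : ∀ y ∈ unitSphere, w y = 0)
    (x t : E3) (hx : ‖x‖ = 1) (ht : ‖t‖ = 1) (htx : ⟪t, x⟫ = 0) (s : ℝ) :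
    fderiv ℝ w (gc x t s) (gc' x t s) = 0 := by
  have hmem : ∀ s' : ℝ, gc x t s' ∈ U := fun s' => hS (gc_mem x t hx ht htx s')
  have hdw : ∀ s' : ℝ, HasFDerivAt w (fderiv ℝ w (gc x t s')) (gc x t s') := fun s' =>
    ((hw.contDiffAt (hU.mem_nhds (hmem s'))).differentiableAt one_ne_zero).hasFDerivAt
  have hcomp : HasDerivAt (fun s' => w (gc x t s'))
      ((fderiv ℝ w (gc x t s)) (gc' x t s)) s :=
    (hdw s).comp_hasDerivAt s (gc_hasDerivAt x t s)
  have hzero : (fun s' => w (gc x t s')) = fun _ => (0 : F) :=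
    funext fun s' => hw0 _ (gc_mem x t hx ht htx s')
  rw [hzero] at hcomp
  exact hcomp.unique (hasDerivAt_const s 0)

lemma fderiv_tangent (U : Set E3) (hU : IsOpen U) (hS : unitSphere ⊆ U)
    (w : E3 → F) (hw : ContDiffOn ℝ 1 w U) (hw0 : ∀ y ∈ unitSphere, w y = 0)
    (x t : E3) (hx : ‖x‖ = 1) (ht : ‖t‖ = 1) (htx : ⟪t, x⟫ = 0) :
    fderiv ℝ w x t = 0 := by
  have h := fderiv_gc_dir U hU hS w hw hw0 x t hx ht htx 0
  rwa [gc_zero, gc'_zero] at h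

/-- Second-order: for a C² function vanishing on the sphere,
`D²w(x)(t,t) = Dw(x)(x)` whenever `t ⊥ x` are unit. -/
lemma d2_tangent (U : Set E3) (hU : IsOpen U) (hS : unitSphere ⊆ U)
    (w : E3 → F) (hw : ContDiffOn ℝ 2 w U) (hw0 : ∀ y ∈ unitSphere, w y = 0)
    (x t : E3) (hx : ‖x‖ = 1) (ht : ‖t‖ = 1) (htx : ⟪t, x⟫ = 0) :
    fderiv ℝ (fderiv ℝ w) x t t = fderiv ℝ w x x := by
  have hmem : ∀ s' : ℝ, gc x t s' ∈ U := fun s' => hS (gc_mem x t hx ht htx s')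
  have hw1 : ContDiffOn ℝ 1 w U := hw.of_le one_le_two
  have hH : ∀ s : ℝ, fderiv ℝ w (gc x t s) (gc' x t s) = 0 :=
    fderiv_gc_dir U hU hS w hw1 hw0 x t hx ht htx
  have hd2 : HasFDerivAt (fderiv ℝ w) (fderiv ℝ (fderiv ℝ w) x) x := by
    have h2 : ContDiffAt ℝ 2 w x := hw.contDiffAt (hU.mem_nhds (hS hx))
    exact ((h2.fderiv_right (m := 1) (by norm_num)).differentiableAt one_ne_zero).hasFDerivAt
  have hd2' : HasFDerivAt (fderiv ℝ w) (fderiv ℝ (fderiv ℝ w) x) (gc x t 0) := by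
    rw [gc_zero]; exact hd2
  have hA : HasDerivAt (fun s => fderiv ℝ w (gc x t s))
      (fderiv ℝ (fderiv ℝ w) x (gc' x t 0)) 0 := by
    simpa [Function.comp_def] using hd2'.comp_hasDerivAt 0 (gc_hasDerivAt x t 0)
  have hv : HasDerivAt (gc' x t) ((-Real.cos 0) • x + (-Real.sin 0) • t) 0 :=
    gc'_hasDerivAt x t 0
  have hprod : HasDerivAt (fun s => fderiv ℝ w (gc x t s) (gc' x t s))
      (fderiv ℝ (fderiv ℝ w) x (gc' x t 0) (gc' x t 0)
        + fderiv ℝ w (gc x t 0) ((-Real.cos 0) • x + (-Real.sin 0) • t)) 0 :=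
    hA.clm_apply hv
  have hzero : (fun s => fderiv ℝ w (gc x t s) (gc' x t s)) = fun _ => (0 : F) :=
    funext hH
  rw [hzero] at hprod
  have hfin := hprod.unique (hasDerivAt_const 0 0)
  rw [gc_zero, gc'_zero] at hfin
  simp only [Real.cos_zero, Real.sin_zero, neg_zero, zero_smul, add_zero, neg_smul, one_smul,
    map_neg] at hfin
  rwa [add_neg_eq_zero] at hfin

end Curve

lemma inner_grad (q : E3 → ℝ) (x v : E3) : ⟪gradient q x, v⟫ = fderiv ℝ q x v := by
  rw [gradient]
  exact InnerProductSpace.toDual_symm_apply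

/-- Theorem 3.9 on the unit sphere (normal `n(x) = x`, total curvature `H = 2`):
`[μ ∂²u/∂n²] = −[μ]∇ₛ²q − [μ ∂u/∂n]H + [∂p/∂n]n − ∇ₛ(f·n) − [g]`. -/
theorem jump_mu_d2udn2_sphere
    (μp μm : ℝ) (hμp : 0 < μp) (hμm : 0 < μm)
    (Up Um : Set E3) (hUp : IsOpen Up) (hUm : IsOpen Um)
    (hSUp : unitSphere ⊆ Up) (hSUm : unitSphere ⊆ Um)
    (up um : E3 → E3) (pp pm : E3 → ℝ) (gp gm : E3 → E3) (f : E3 → E3)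
    (hup : ContDiffOn ℝ 2 up Up) (hum : ContDiffOn ℝ 2 um Um)
    (hpp : ContDiffOn ℝ 1 pp Up) (hpm : ContDiffOn ℝ 1 pm Um)
    (hgp : Continuous gp) (hgm : Continuous gm)
    (Vf : Set E3) (hVf : IsOpen Vf) (hSVf : unitSphere ⊆ Vf)
    (hf : ContDiffOn ℝ 1 f Vf)
    (hstokesp : ∀ x ∈ unitSphere, gradient pp x = μp • vecLap up x + gp x)
    (hstokesm : ∀ x ∈ unitSphere, gradient pm x = μm • vecLap um x + gm x)
    (hcont : ∀ x ∈ unitSphere, up x = um x)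
    (hpjump : ∀ x ∈ unitSphere, pp x - pm x = -⟪f x, x⟫) :
    ∀ x ∈ unitSphere, ∀ t b : E3,
      ‖t‖ = 1 → ‖b‖ = 1 → ⟪t, b⟫ = 0 → ⟪t, x⟫ = 0 → ⟪b, x⟫ = 0 →
      μp • D2 up x x x - μm • D2 um x x x
        = -((μp - μm) • (D2 um x t t + D2 um x b b - (2 : ℝ) • fderiv ℝ um x x))
          - (2 : ℝ) • (μp • fderiv ℝ up x x - μm • fderiv ℝ um x x)
          + ⟪gradient pp x - gradient pm x, x⟫ • x
          - (gradient (fun y => ⟪f y, y⟫) x - ⟪gradient (fun y => ⟪f y, y⟫) x, x⟫ • x)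
          - (gp x - gm x) := by
  intro x hxS t b ht hb htb htx hbx
  have hx : ‖x‖ = 1 := hxS
  have hxUp : x ∈ Up := hSUp hxS
  have hxUm : x ∈ Um := hSUm hxS
  have hxVf : x ∈ Vf := hSVf hxS
  obtain ⟨e, he⟩ := onb_of t b x ht hb hx htb htx hbx
  have h0 : e 0 = t := by rw [he]; rfl
  have h1 : e 1 = b := by rw [he]; rfl
  have h2 : e 2 = x := by rw [he]; rfl
  -- Laplacian in the adapted orthonormal basis
  have hLap : ∀ u : E3 → E3, vecLap u x = D2 u x t t + D2 u x b b + D2 u x x x := by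
    intro u
    have h := trace_onb (fderiv ℝ (fderiv ℝ u) x) e
    calc vecLap u x = ∑ i : Fin 3, fderiv ℝ (fderiv ℝ u) x (e i) (e i) := h
      _ = D2 u x t t + D2 u x b b + D2 u x x x := by
          rw [Fin.sum_univ_three, h0, h1, h2]; rfl
  -- Stokes equations in adapted form
  have E1 : gradient pp x = μp • (D2 up x t t + D2 up x b b + D2 up x x x) + gp x := by
    rw [← hLap up]; exact hstokesp x hxS
  have E2 : gradient pm x = μm • (D2 um x t t + D2 um x b b + D2 um x x x) + gm x := by
    rw [← hLap um]; exact hstokesm x hxS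
  -- tangential second derivatives of the velocity jump
  set W : Set E3 := Up ∩ Um with hWdef
  have hW : IsOpen W := hUp.inter hUm
  have hSW : unitSphere ⊆ W := fun y hy => ⟨hSUp hy, hSUm hy⟩
  have hwC : ContDiffOn ℝ 2 (fun y => up y - um y) W :=
    (hup.mono Set.inter_subset_left).sub (hum.mono Set.inter_subset_right)
  have hw0 : ∀ y ∈ unitSphere, up y - um y = 0 := fun y hy => sub_eq_zero_of_eq (hcont y hy)
  have hupx : ContDiffAt ℝ 2 up x := hup.contDiffAt (hUp.mem_nhds hxUp)
  have humx : ContDiffAt ℝ 2 um x := hum.contDiffAt (hUm.mem_nhds hxUm)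
  have hdup : DifferentiableAt ℝ up x := hupx.differentiableAt two_ne_zero
  have hdum : DifferentiableAt ℝ um x := humx.differentiableAt two_ne_zero
  have hdfp : DifferentiableAt ℝ (fderiv ℝ up) x :=
    (hupx.fderiv_right (m := 1) (by norm_num)).differentiableAt one_ne_zero
  have hdfm : DifferentiableAt ℝ (fderiv ℝ um) x :=
    (humx.fderiv_right (m := 1) (by norm_num)).differentiableAt one_ne_zero
  have hev : fderiv ℝ (fun y => up y - um y) =ᶠ[nhds x]
      fun y => fderiv ℝ up y - fderiv ℝ um y := by
    refine Filter.eventually_of_mem (hW.mem_nhds (hSW hxS)) fun y hy => ?_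
    exact fderiv_sub
      ((hup.contDiffAt (hUp.mem_nhds hy.1)).differentiableAt two_ne_zero)
      ((hum.contDiffAt (hUm.mem_nhds hy.2)).differentiableAt two_ne_zero)
  have h2eq : fderiv ℝ (fderiv ℝ (fun y => up y - um y)) x
      = fderiv ℝ (fderiv ℝ up) x - fderiv ℝ (fderiv ℝ um) x := by
    rw [hev.fderiv_eq, fderiv_fun_sub hdfp hdfm]
  have h1eq : fderiv ℝ (fun y => up y - um y) x = fderiv ℝ up x - fderiv ℝ um x :=
    fderiv_sub hdup hdum
  have E3t : D2 up x t t - D2 um x t t = fderiv ℝ up x x - fderiv ℝ um x x := by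
    have h := d2_tangent W hW hSW _ hwC hw0 x t hx ht htx
    rw [h2eq, h1eq] at h
    simpa [D2, ContinuousLinearMap.sub_apply] using h
  have E3b : D2 up x b b - D2 um x b b = fderiv ℝ up x x - fderiv ℝ um x x := by
    have h := d2_tangent W hW hSW _ hwC hw0 x b hx hb hbx
    rw [h2eq, h1eq] at h
    simpa [D2, ContinuousLinearMap.sub_apply] using h
  -- the tangential pressure/surface-tension balance
  set W2 : Set E3 := Up ∩ Um ∩ Vf with hW2def
  have hW2 : IsOpen W2 := (hUp.inter hUm).inter hVf
  have hSW2 : unitSphere ⊆ W2 := fun y hy => ⟨⟨hSUp hy, hSUm hy⟩, hSVf hy⟩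
  have hhC : ContDiffOn ℝ 1 (fun y => pp y - pm y + ⟪f y, y⟫) W2 := by
    refine ContDiffOn.add ?_ ?_
    · exact (hpp.mono fun y hy => hy.1.1).sub (hpm.mono fun y hy => hy.1.2)
    · exact (hf.mono fun y hy => hy.2).inner ℝ contDiffOn_id
  have hh0 : ∀ y ∈ unitSphere, pp y - pm y + ⟪f y, y⟫ = 0 := fun y hy => by
    rw [hpjump y hy]; ring
  have hppx : DifferentiableAt ℝ pp x :=
    (hpp.contDiffAt (hUp.mem_nhds hxUp)).differentiableAt one_ne_zero
  have hpmx : DifferentiableAt ℝ pm x :=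
    (hpm.contDiffAt (hUm.mem_nhds hxUm)).differentiableAt one_ne_zero
  have hphix : DifferentiableAt ℝ (fun y => ⟪f y, y⟫) x :=
    (((hf.contDiffAt (hVf.mem_nhds hxVf)).inner ℝ contDiffAt_id)).differentiableAt one_ne_zero
  have hfd : fderiv ℝ (fun y => pp y - pm y + ⟪f y, y⟫) x
      = fderiv ℝ pp x - fderiv ℝ pm x + fderiv ℝ (fun y => ⟪f y, y⟫) x := by
    rw [fderiv_fun_add (f := fun y => pp y - pm y) (hppx.sub hpmx) hphix, fderiv_fun_sub hppx hpmx]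
  have hcomp : ∀ v : E3, ‖v‖ = 1 → ⟪v, x⟫ = 0 →
      ⟪gradient pp x, v⟫ - ⟪gradient pm x, v⟫ + ⟪gradient (fun y => ⟪f y, y⟫) x, v⟫ = 0 := by
    intro v hv hvx
    rw [inner_grad, inner_grad, inner_grad]
    have h := fderiv_tangent W2 hW2 hSW2 _ hhC hh0 x v hx hv hvx
    rw [hfd] at h
    simpa using h
  set P : E3 := gradient pp x - gradient pm x + gradient (fun y => ⟪f y, y⟫) x with hPdef
  have hPt : ⟪t, P⟫ = 0 := by
    rw [real_inner_comm, hPdef, inner_add_left, inner_sub_left]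
    exact hcomp t ht htx
  have hPb : ⟪b, P⟫ = 0 := by
    rw [real_inner_comm, hPdef, inner_add_left, inner_sub_left]
    exact hcomp b hb hbx
  have hPx : ⟪x, P⟫ = ⟪gradient pp x - gradient pm x, x⟫
      + ⟪gradient (fun y => ⟪f y, y⟫) x, x⟫ := by
    rw [real_inner_comm, hPdef, inner_add_left]
  have E4 : gradient pp x - gradient pm x + gradient (fun y => ⟪f y, y⟫) x
      = (⟪gradient pp x - gradient pm x, x⟫ + ⟪gradient (fun y => ⟪f y, y⟫) x, x⟫) • x := by
    have h := e.sum_repr' P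
    rw [Fin.sum_univ_three, h0, h1, h2, hPt, hPb, hPx, zero_smul, zero_smul, zero_add,
      zero_add] at h
    rw [← hPdef]
    exact h.symm
  -- final linear algebra
  linear_combination (norm := module) E2 - E1 - μp • E3t - μp • E3b + E4
end
end

section
/- Let S² = {x ∈ ℝ³ : ‖x‖ = 1} and let u⁺, u⁻ : ℝ³ → ℝ³ be C² on open sets containing S², with u⁺(x) = u⁻(x) for all x ∈ S², and trace(Du⁺(x)) = 0 and trace(Du⁻(x)) = 0 for all x ∈ S². Then for every x ∈ S² and every unit vector t with ⟪t, x⟫ = 0: ⟪(D²u⁺(x) − D²u⁻(x))(t, t), x⟫ = 0. -/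
open RealInnerProductSpace

noncomputable section

lemma comb_inner {x t : E3} (hx : ‖x‖ = 1) (ht : ‖t‖ = 1) (hxt : ⟪t, x⟫ = 0)
    (a b c d : ℝ) : ⟪a • x + b • t, c • x + d • t⟫ = a * c + b * d := by
  have hx2 : ⟪x, x⟫ = 1 := by rw [real_inner_self_eq_norm_sq, hx]; norm_num
  have ht2 : ⟪t, t⟫ = 1 := by rw [real_inner_self_eq_norm_sq, ht]; norm_num
  have htx : ⟪x, t⟫ = 0 := by rw [real_inner_comm]; exact hxt
  simp only [inner_add_left, inner_add_right, real_inner_smul_left, real_inner_smul_right,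
    hx2, ht2, hxt, htx]
  ring

lemma comb_norm {x t : E3} (hx : ‖x‖ = 1) (ht : ‖t‖ = 1) (hxt : ⟪t, x⟫ = 0)
    {a b : ℝ} (hab : a ^ 2 + b ^ 2 = 1) : ‖a • x + b • t‖ = 1 := by
  have h := comb_inner hx ht hxt a b a b
  have : ‖a • x + b • t‖ ^ 2 = 1 := by
    rw [← real_inner_self_eq_norm_sq, h]; nlinarith
  nlinarith [norm_nonneg (a • x + b • t)]

lemma tangential_deriv_zero {U : Set E3} (hU : IsOpen U) (hSU : unitSphere ⊆ U)
    {w : E3 → E3} (hw : ContDiffOn ℝ 2 w U) (hw0 : ∀ y ∈ unitSphere, w y = 0)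
    {x t : E3} (hx : x ∈ unitSphere) (ht : ‖t‖ = 1) (hxt : ⟪t, x⟫ = 0) :
    fderiv ℝ w x t = 0 := by
  have hx1 : ‖x‖ = 1 := hx
  set γ : ℝ → E3 := fun s => Real.cos s • x + Real.sin s • t with hγdef
  have hγ : ∀ s, γ s ∈ unitSphere := fun s =>
    comb_norm hx1 ht hxt (by rw [add_comm]; exact Real.sin_sq_add_cos_sq s)
  have hγ0 : γ 0 = x := by simp [hγdef]
  have hγd : HasDerivAt γ t 0 := by
    have h1 := (Real.hasDerivAt_cos 0).smul_const x
    have h2 := (Real.hasDerivAt_sin 0).smul_const t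
    exact (h1.add h2).congr_deriv (by simp)
  have hwd : DifferentiableAt ℝ w x :=
    (hw.contDiffAt (hU.mem_nhds (hSU hx))).differentiableAt two_ne_zero
  have hcomp : HasDerivAt (fun s => w (γ s)) (fderiv ℝ w x t) 0 := by
    have hw' : HasFDerivAt w (fderiv ℝ w x) (γ 0) := hγ0 ▸ hwd.hasFDerivAt
    exact hw'.comp_hasDerivAt 0 hγd
  have hzero : (fun s => w (γ s)) = fun _ => (0 : E3) :=
    funext fun s => hw0 _ (hγ s)
  rw [hzero] at hcomp
  exact ((hasDerivAt_const (0 : ℝ) (0 : E3)).unique hcomp).symm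

lemma tangential_deriv_zero' {U : Set E3} (hU : IsOpen U) (hSU : unitSphere ⊆ U)
    {w : E3 → E3} (hw : ContDiffOn ℝ 2 w U) (hw0 : ∀ y ∈ unitSphere, w y = 0)
    {x : E3} (hx : x ∈ unitSphere) (v : E3) (hxv : ⟪v, x⟫ = 0) :
    fderiv ℝ w x v = 0 := by
  rcases eq_or_ne v 0 with rfl | hv
  · simp
  · have hnv : ‖v‖ ≠ 0 := norm_ne_zero_iff.mpr hv
    have ht : ‖(‖v‖⁻¹ • v)‖ = 1 := by
      rw [norm_smul, norm_inv, norm_norm, inv_mul_cancel₀ hnv]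
    have hxt : ⟪(‖v‖⁻¹ • v), x⟫ = 0 := by
      rw [real_inner_smul_left, hxv, mul_zero]
    have h := tangential_deriv_zero hU hSU hw hw0 hx ht hxt
    have h2 : fderiv ℝ w x (‖v‖ • (‖v‖⁻¹ • v)) = 0 := by
      rw [map_smul, h, smul_zero]
    rwa [smul_inv_smul₀ hnv] at h2

lemma trace_eq_inner_of_tangent_zero {x : E3} (hx : ‖x‖ = 1) (A : E3 →ₗ[ℝ] E3)
    (hA : ∀ v : E3, ⟪v, x⟫ = 0 → A v = 0) :
    LinearMap.trace ℝ E3 A = ⟪x, A x⟫ := by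
  have hcard : Module.finrank ℝ E3 = Fintype.card (Fin 3) := by
    simp [finrank_euclideanSpace]
  have hv : Orthonormal ℝ (Set.restrict ({0} : Set (Fin 3)) (![x, 0, 0])) := by
    constructor
    · rintro ⟨i, hi⟩
      simp only [Set.mem_singleton_iff] at hi
      subst hi
      exact hx
    · rintro ⟨i, hi⟩ ⟨j, hj⟩ hij
      simp only [Set.mem_singleton_iff] at hi hj
      exact absurd (Subtype.ext (hi.trans hj.symm)) hij
  obtain ⟨b, hb⟩ := hv.exists_orthonormalBasis_extension_of_card_eq hcard
  have hb0 : b 0 = x := by simpa using hb 0 rfl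
  have hrepr : ∀ (y : E3) (i : Fin 3), b.toBasis.repr y i = ⟪b i, y⟫ := by
    intro y i
    rw [b.coe_toBasis_repr_apply, b.repr_apply_apply]
  have htangent : ∀ i : Fin 3, i ≠ 0 → A (b i) = 0 := by
    intro i hi
    apply hA
    have h := b.orthonormal.2 (show i ≠ 0 from hi)
    simp only at h
    rwa [hb0] at h
  rw [LinearMap.trace_eq_matrix_trace ℝ b.toBasis, Matrix.trace]
  have hdiag : ∀ i : Fin 3, (LinearMap.toMatrix b.toBasis b.toBasis A).diag i
      = ⟪b i, A (b i)⟫ := by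
    intro i
    rw [Matrix.diag_apply, LinearMap.toMatrix_apply, hrepr, b.coe_toBasis]
  rw [Fin.sum_univ_three, hdiag, hdiag, hdiag,
    htangent 1 (by decide), htangent 2 (by decide), hb0]
  simp

lemma second_tangential_deriv_eq {U : Set E3} (hU : IsOpen U) (hSU : unitSphere ⊆ U)
    {w : E3 → E3} (hw : ContDiffOn ℝ 2 w U) (hw0 : ∀ y ∈ unitSphere, w y = 0)
    {x t : E3} (hx : x ∈ unitSphere) (ht : ‖t‖ = 1) (hxt : ⟪t, x⟫ = 0) :
    fderiv ℝ (fderiv ℝ w) x t t = fderiv ℝ w x x := by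
  have hx1 : ‖x‖ = 1 := hx
  set γ : ℝ → E3 := fun s => Real.cos s • x + Real.sin s • t with hγdef
  set γ' : ℝ → E3 := fun s => (-Real.sin s) • x + Real.cos s • t with hγ'def
  have hγ : ∀ s, γ s ∈ unitSphere := fun s =>
    comb_norm hx1 ht hxt (by rw [add_comm]; exact Real.sin_sq_add_cos_sq s)
  have hγ'mem : ∀ s, ‖γ' s‖ = 1 := fun s =>
    comb_norm hx1 ht hxt (by rw [neg_sq, add_comm]; exact Real.cos_sq_add_sin_sq s)
  have hγ'orth : ∀ s, ⟪γ' s, γ s⟫ = 0 := fun s => by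
    rw [hγ'def, hγdef]
    rw [comb_inner hx1 ht hxt]
    ring
  have hγ0 : γ 0 = x := by simp [hγdef]
  have hγ'0 : γ' 0 = t := by simp [hγ'def]
  have hγd : ∀ s, HasDerivAt γ (γ' s) s := by
    intro s
    have h1 := (Real.hasDerivAt_cos s).smul_const x
    have h2 := (Real.hasDerivAt_sin s).smul_const t
    exact h1.add h2
  have hγ'd : HasDerivAt γ' (-x) 0 := by
    have h1 := ((Real.hasDerivAt_sin 0).neg.smul_const x)
    have h2 := (Real.hasDerivAt_cos 0).smul_const t
    have := h1.add h2
    simp only [Real.cos_zero, Real.sin_zero, neg_zero, zero_smul, neg_smul, one_smul] at this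
    exact (h1.add h2).congr_deriv (by simp)
  -- the first derivative map is C¹ on U, hence differentiable at x
  have hfd1 : ContDiffOn ℝ 1 (fderiv ℝ w) U := hw.fderiv_of_isOpen hU le_rfl
  have hfdd : DifferentiableAt ℝ (fderiv ℝ w) x :=
    (hfd1.contDiffAt (hU.mem_nhds (hSU hx))).differentiableAt one_ne_zero
  have hA : HasDerivAt (fun s => fderiv ℝ w (γ s)) (fderiv ℝ (fderiv ℝ w) x t) 0 := by
    have hw' : HasFDerivAt (fderiv ℝ w) (fderiv ℝ (fderiv ℝ w) x) (γ 0) :=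
      hγ0 ▸ hfdd.hasFDerivAt
    have := hw'.comp_hasDerivAt 0 (hγ'0 ▸ hγd 0)
    exact this
  have hψ : HasDerivAt (fun s => fderiv ℝ w (γ s) (γ' s))
      (fderiv ℝ (fderiv ℝ w) x t (γ' 0) + fderiv ℝ w (γ 0) (-x)) 0 :=
    hA.clm_apply hγ'd
  have hψ0 : (fun s => fderiv ℝ w (γ s) (γ' s)) = fun _ => (0 : E3) := by
    funext s
    exact tangential_deriv_zero hU hSU hw hw0 (hγ s) (hγ'mem s) (hγ'orth s)
  rw [hψ0] at hψ
  have h0 := (hasDerivAt_const (0 : ℝ) (0 : E3)).unique hψ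
  rw [hγ0, hγ'0, map_neg] at h0
  have := h0.symm
  rw [add_neg_eq_zero] at this
  exact this

/-- The relation `[∂²u/∂t²]·n = 0` on the unit sphere for a velocity field that is
continuous across the interface and divergence-free on each side. -/
theorem jump_second_tangential_derivative_normal_zero
    (Up Um : Set E3) (hUp : IsOpen Up) (hUm : IsOpen Um)
    (hSUp : unitSphere ⊆ Up) (hSUm : unitSphere ⊆ Um)
    (up um : E3 → E3)
    (hup : ContDiffOn ℝ 2 up Up) (hum : ContDiffOn ℝ 2 um Um)
    (hcont : ∀ x ∈ unitSphere, up x = um x)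
    (hdivp : ∀ x ∈ unitSphere, LinearMap.trace ℝ E3 (fderiv ℝ up x : E3 →ₗ[ℝ] E3) = 0)
    (hdivm : ∀ x ∈ unitSphere, LinearMap.trace ℝ E3 (fderiv ℝ um x : E3 →ₗ[ℝ] E3) = 0) :
    ∀ x ∈ unitSphere, ∀ t : E3, ‖t‖ = 1 → ⟪t, x⟫ = 0 →
      ⟪D2 up x t t - D2 um x t t, x⟫ = 0 := by
  intro x hx t ht hxt
  set U : Set E3 := Up ∩ Um with hUdef
  have hU : IsOpen U := hUp.inter hUm
  have hSU : unitSphere ⊆ U := Set.subset_inter hSUp hSUm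
  set w : E3 → E3 := fun y => up y - um y with hwdef
  have hw : ContDiffOn ℝ 2 w U :=
    (hup.mono Set.inter_subset_left).sub (hum.mono Set.inter_subset_right)
  have hw0 : ∀ y ∈ unitSphere, w y = 0 := fun y hy => by
    simp [hwdef, hcont y hy]
  have hxU : x ∈ U := hSU hx
  -- differentiability facts
  have hdup : ∀ y ∈ U, DifferentiableAt ℝ up y := fun y hy =>
    (hup.contDiffAt (hUp.mem_nhds hy.1)).differentiableAt two_ne_zero
  have hdum : ∀ y ∈ U, DifferentiableAt ℝ um y := fun y hy =>
    (hum.contDiffAt (hUm.mem_nhds hy.2)).differentiableAt two_ne_zero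
  -- fderiv w = fderiv up - fderiv um on U
  have hfw : ∀ y ∈ U, fderiv ℝ w y = fderiv ℝ up y - fderiv ℝ um y := fun y hy =>
    fderiv_sub (hdup y hy) (hdum y hy)
  -- second derivative relation
  have hsecond : fderiv ℝ (fderiv ℝ w) x t t = fderiv ℝ w x x :=
    second_tangential_deriv_eq hU hSU hw hw0 hx ht hxt
  -- trace of fderiv w x is zero
  have htr : LinearMap.trace ℝ E3 (fderiv ℝ w x : E3 →ₗ[ℝ] E3) = 0 := by
    rw [hfw x hxU]
    rw [ContinuousLinearMap.coe_sub, map_sub, hdivp x hx, hdivm x hx, sub_zero]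
  -- tangential derivatives vanish
  have htan : ∀ v : E3, ⟪v, x⟫ = 0 → fderiv ℝ w x v = 0 :=
    tangential_deriv_zero' hU hSU hw hw0 hx
  have htan' : ∀ v : E3, ⟪v, x⟫ = 0 → (fderiv ℝ w x : E3 →ₗ[ℝ] E3) v = 0 := htan
  have hnorm : ⟪fderiv ℝ w x x, x⟫ = 0 := by
    have := trace_eq_inner_of_tangent_zero (x := x) hx
      (fderiv ℝ w x : E3 →ₗ[ℝ] E3) htan'
    rw [htr] at this
    rw [real_inner_comm]
    exact this.symm
  -- second derivative of w equals difference of second derivatives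
  have heq : D2 up x t t - D2 um x t t = fderiv ℝ (fderiv ℝ w) x t t := by
    have hev : fderiv ℝ w =ᶠ[nhds x] fun y => fderiv ℝ up y - fderiv ℝ um y :=
      Filter.eventuallyEq_of_mem (hU.mem_nhds hxU) hfw
    have h1 : fderiv ℝ (fderiv ℝ w) x
        = fderiv ℝ (fun y => fderiv ℝ up y - fderiv ℝ um y) x := hev.fderiv_eq
    have hdp : DifferentiableAt ℝ (fderiv ℝ up) x :=
      (((hup.fderiv_of_isOpen hUp le_rfl).contDiffAt
        (hUp.mem_nhds hxU.1)).differentiableAt one_ne_zero)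
    have hdm : DifferentiableAt ℝ (fderiv ℝ um) x :=
      (((hum.fderiv_of_isOpen hUm le_rfl).contDiffAt
        (hUm.mem_nhds hxU.2)).differentiableAt one_ne_zero)
    have h2 : fderiv ℝ (fun y => fderiv ℝ up y - fderiv ℝ um y) x
        = fderiv ℝ (fderiv ℝ up) x - fderiv ℝ (fderiv ℝ um) x := fderiv_sub hdp hdm
    rw [D2, D2, h1, h2]
    simp
  rw [heq, hsecond]
  exact hnorm
end
end

section
/- Let u⁻(x,y,z) = (2yz, −xz, −xy) and u⁺(x,y,z) = (2yz, −xz, −xy)/(x²+y²+z²). Then for every x ∈ ℝ³ with ‖x‖ = 1: u⁺(x) = u⁻(x) (the velocity is continuous across the unit sphere), ⟪u⁻(x), x⟫ = 0 (the interface velocity is tangential), and ⟪Du⁻(x)x, x⟫ = 0; since also trace(Du⁻(x)) = 0, the surface divergence ∇ₛ·u⁻(x) = trace(Du⁻(x)) − ⟪Du⁻(x)x, x⟫ vanishes on the unit sphere, i.e. the interface velocity q = u⁻|_{S²} is surface-divergence free. -/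
open RealInnerProductSpace

noncomputable section

/-- The interior analytic test velocity `u⁻(x,y,z) = (2yz, −xz, −xy)`. -/
def uInner : E3 → E3 := fun x => WithLp.toLp 2 ![2 * x 1 * x 2, -(x 0 * x 2), -(x 0 * x 1)]

/-- The exterior analytic test velocity `u⁺(x,y,z) = (2yz, −xz, −xy)/(x²+y²+z²)`. -/
def uOuter : E3 → E3 := fun x =>
  (x 0 ^ 2 + x 1 ^ 2 + x 2 ^ 2)⁻¹ •
    (WithLp.toLp 2 ![2 * x 1 * x 2, -(x 0 * x 2), -(x 0 * x 1)] : E3)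

def pr (i : Fin 3) : E3 →L[ℝ] ℝ := EuclideanSpace.proj i

def Du (x : E3) : E3 →L[ℝ] E3 :=
  (EuclideanSpace.equiv (Fin 3) ℝ).symm.toContinuousLinearMap.comp
    (ContinuousLinearMap.pi
      ![(2 * x 2) • pr 1 + (2 * x 1) • pr 2,
        -(x 2 • pr 0 + x 0 • pr 2),
        -(x 1 • pr 0 + x 0 • pr 1)])

lemma Du_apply (x v : E3) : Du x v = ![2 * (x 2 * v 1 + x 1 * v 2),
    -(x 2 * v 0 + x 0 * v 2), -(x 1 * v 0 + x 0 * v 1)] := by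
  funext i
  fin_cases i <;>
    simp [Du, pr, ContinuousLinearMap.pi_apply, EuclideanSpace.equiv] <;> ring

lemma hasFDeriv_uInner (x : E3) : HasFDerivAt uInner (Du x) x := by
  have hp : ∀ i : Fin 3, HasFDerivAt (fun y : E3 => y i) (pr i) x :=
    fun i => (pr i).hasFDerivAt
  have h0 : HasFDerivAt (fun y : E3 => 2 * y 1 * y 2)
      ((2 * x 2) • pr 1 + (2 * x 1) • pr 2) x := by
    have := ((hp 1).const_mul 2).mul (hp 2)
    refine this.congr_fderiv ?_
    ext v
    simp [pr]
    ring
  have h1 : HasFDerivAt (fun y : E3 => -(y 0 * y 2))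
      (-(x 2 • pr 0 + x 0 • pr 2)) x := by
    have := ((hp 0).mul (hp 2)).neg
    refine this.congr_fderiv ?_
    ext v
    simp [pr]
    ring
  have h2 : HasFDerivAt (fun y : E3 => -(y 0 * y 1))
      (-(x 1 • pr 0 + x 0 • pr 1)) x := by
    have := ((hp 0).mul (hp 1)).neg
    refine this.congr_fderiv ?_
    ext v
    simp [pr]
    ring
  have hpi : HasFDerivAt (fun y : E3 => (![2 * y 1 * y 2, -(y 0 * y 2), -(y 0 * y 1)] : Fin 3 → ℝ))
      (ContinuousLinearMap.pi
        ![(2 * x 2) • pr 1 + (2 * x 1) • pr 2,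
          -(x 2 • pr 0 + x 0 • pr 2),
          -(x 1 • pr 0 + x 0 • pr 1)]) x := by
    apply hasFDerivAt_pi''
    intro i
    fin_cases i <;> rw [ContinuousLinearMap.proj_pi] <;> first | exact h0 | exact h1 | exact h2
  have : uInner = (EuclideanSpace.equiv (Fin 3) ℝ).symm ∘
      (fun y : E3 => (![2 * y 1 * y 2, -(y 0 * y 2), -(y 0 * y 1)] : Fin 3 → ℝ)) := rfl
  rw [this]
  exact ((EuclideanSpace.equiv (Fin 3) ℝ).symm.hasFDerivAt).comp x hpi

/-- Interface conditions for the analytic test case on the unit sphere: the velocity is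
continuous across the sphere, tangential, and the interface velocity is
surface-divergence free. -/
theorem test_interface_conditions (x : E3) (hx : ‖x‖ = 1) :
    uOuter x = uInner x ∧
    ⟪uInner x, x⟫ = 0 ∧
    ⟪fderiv ℝ uInner x x, x⟫ = 0 ∧
    LinearMap.trace ℝ E3 (fderiv ℝ uInner x : E3 →ₗ[ℝ] E3) = 0 ∧
    LinearMap.trace ℝ E3 (fderiv ℝ uInner x : E3 →ₗ[ℝ] E3)
      - ⟪fderiv ℝ uInner x x, x⟫ = 0 := by
  have hs : x 0 ^ 2 + x 1 ^ 2 + x 2 ^ 2 = 1 := by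
    have h2 : ‖x‖ ^ 2 = (1 : ℝ) ^ 2 := by rw [hx]
    rw [EuclideanSpace.norm_eq] at h2
    rw [Real.sq_sqrt (by positivity)] at h2
    simpa [Fin.sum_univ_three, sq_abs] using h2
  have hf : fderiv ℝ uInner x = Du x := (hasFDeriv_uInner x).fderiv
  have htr : LinearMap.trace ℝ E3 (fderiv ℝ uInner x : E3 →ₗ[ℝ] E3) = 0 := by
    rw [hf, LinearMap.trace_eq_matrix_trace ℝ (EuclideanSpace.basisFun (Fin 3) ℝ).toBasis,
      Matrix.trace]
    simp [LinearMap.toMatrix_apply, Fin.sum_univ_three, Du_apply,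
      EuclideanSpace.basisFun_apply, EuclideanSpace.single_apply]
  have hinn : ⟪fderiv ℝ uInner x x, x⟫ = 0 := by
    rw [hf]
    simp [PiLp.inner_apply, Fin.sum_univ_three, Du_apply]
    ring
  refine ⟨?_, ?_, hinn, htr, by rw [htr, hinn]; ring⟩
  · simp [uOuter, uInner, hs]
  · simp [uInner, PiLp.inner_apply, Fin.sum_univ_three]
    ring
end
end
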